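/- arXiv:2511.22370 — 2 statements merged into one kernel-verified Lean document; each statement's English description precedes it below -/
import Mathlib

section
/- In the min-based reduction instance built from a simple graph H = (V, E) and an odd integer k ≥ 3, under min-EQ utilities or under min-AL utilities with fixed weight w ≥ n^4, the following holds: if a coalition C ⊆ N blocks the coalition structure Γ, then every player i ∈ C has at least k−1 friends in C. -/
/-!
Let `L = n(k - 1) - (k' - k)` be the value a gadget player gives its own gadget; since `n ≥ k'`,
`L > n(k - 2)`, so any player valuing a coalition at least `L` has `k - 1` friends in it.
A gadget player `g` in a blocking coalition `C` forces every friend of `g` in `C` to value `C`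
at least `L`: under min-EQ its utility is a minimum over these values, under min-AL the weight
`w ≥ n²` dwarfs any change of `g`'s own valuation.

A gadget player `i` of `C` values `C` at least `L` itself or has a friend in `C` who does. A
dummy friend of degree `k - 1` has all its neighbours in `C`, and then `i`, one of the edge or
incidence players next to it, is adjacent to another gadget player of `C`. A dummy `i` of an
edge `e` is settled by the first paragraph if one of its three gadget neighbours is in `C`;
otherwise everyone in its reach in `C` values `C` at most `n(k - 4)`, which the clique `A_e`
already gives, so `i` does not prefer `C`.
-/

open Finset
open scoped Classical

section AHGDefs

variable {N : Type*} [Fintype N] [DecidableEq N]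

/-- The set of friends of player `i` inside coalition `C`. -/
noncomputable def friendsIn (G : SimpleGraph N) (C : Finset N) (i : N) : Finset N :=
  C.filter fun j => G.Adj i j

/-- The friend-oriented valuation of coalition `C` by player `i`:
`val_i(C) = n·|F_i ∩ C| − |E_i ∩ C|`. -/
noncomputable def fval (G : SimpleGraph N) (C : Finset N) (i : N) : ℤ :=
  (Fintype.card N : ℤ) * ((friendsIn G C i).card : ℤ)
    - ((C.filter fun j => ¬ G.Adj i j ∧ j ≠ i).card : ℤ)

/-- Average-based equal-treatment utility. -/
noncomputable def utilAvgEQ (G : SimpleGraph N) (C : Finset N) (i : N) : ℚ :=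
  (∑ c ∈ insert i (friendsIn G C i), (fval G C c : ℚ)) /
    ((insert i (friendsIn G C i)).card : ℚ)

/-- Average-based altruistic-treatment utility with weight `w`. -/
noncomputable def utilAvgAL (G : SimpleGraph N) (w : ℚ) (C : Finset N) (i : N) : ℚ :=
  (fval G C i : ℚ) +
    w * (if (friendsIn G C i).Nonempty then
          (∑ c ∈ friendsIn G C i, (fval G C c : ℚ)) / ((friendsIn G C i).card : ℚ)
         else 0)

/-- Min-based equal-treatment utility. -/
noncomputable def utilMinEQ (G : SimpleGraph N) (C : Finset N) (i : N) : ℤ :=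
  (insert i (friendsIn G C i)).inf' (insert_nonempty _ _) (fval G C)

/-- Min-based altruistic-treatment utility with weight `w`. -/
noncomputable def utilMinAL (G : SimpleGraph N) (w : ℤ) (C : Finset N) (i : N) : ℤ :=
  fval G C i +
    w * (if h : (friendsIn G C i).Nonempty then (friendsIn G C i).inf' h (fval G C) else 0)

/-- A coalition structure (partition of the players), given as the map sending
each player to its coalition. -/
structure CoalitionStructure (N : Type*) [Fintype N] [DecidableEq N] where
  part : N → Finset N
  mem_part : ∀ i, i ∈ part i
  part_eq : ∀ i j, j ∈ part i → part j = part i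

/-- A (nonempty) coalition `C` blocks the coalition structure `Γ`. -/
def Blocks {α : Type*} [LT α] (util : Finset N → N → α) (Γ : CoalitionStructure N)
    (C : Finset N) : Prop :=
  C.Nonempty ∧ ∀ i ∈ C, util (Γ.part i) i < util C i

/-- Core stability: no nonempty coalition blocks `Γ`. -/
def CoreStable {α : Type*} [LT α] (util : Finset N → N → α)
    (Γ : CoalitionStructure N) : Prop :=
  ¬ ∃ C : Finset N, Blocks util Γ C

/-- Cyclic distance between two positions on a cycle of length `k'`. -/
def cycDist (k' : ℕ) (a b : Fin k') : ℕ :=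
  min ((a.val + k' - b.val) % k') ((b.val + k' - a.val) % k')

/-- `P` carries an `(r,k')`-circulant gadget of `G`: its `k'` players are arranged
along a cycle of length `k'`, and two players are adjacent iff their distance along
the cycle is at most `r/2` (so each player has `r` friends in the gadget). -/
def IsCirculantGadget (G : SimpleGraph N) (r k' : ℕ) (P : Finset N) : Prop :=
  ∃ f : Fin k' → N, Function.Injective f ∧ Finset.univ.image f = P ∧
    ∀ a b : Fin k', (G.Adj (f a) (f b) ↔ (a ≠ b ∧ cycDist k' a b ≤ r / 2))

/-- The gadget size `k' = k·(k choose 2) + k + 1` of the min-based reduction. -/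
def minK' (k : ℕ) : ℕ := k * Nat.choose k 2 + k + 1

variable {V : Type*} [Fintype V] [DecidableEq V]

/-- The min-based reduction instance built from the graph `H` and an odd `k ≥ 3`:
`G` is the constructed network of friends on the player set `N`; `Pv v`, `Pe e`, and
`Pve v e` are the player sets of the `(k−1,k')`-circulant vertex, edge, and incidence
gadgets with distinguished players `vp v`, `ep e`, and `bp v e` respectively; `Ae e`
are the `k−3` dummy players of edge `e`, forming a clique. Each `bp v e` is further
adjacent to `vp v` and `ep e`, each dummy in `Ae e` to `ep e` and to both incidence
players of `e`, and there are no other edges. -/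
structure MinReduction (H : SimpleGraph V) (k : ℕ) (G : SimpleGraph N)
    (Pv : V → Finset N) (Pe : Sym2 V → Finset N) (Pve : V → Sym2 V → Finset N)
    (Ae : Sym2 V → Finset N) (vp : V → N) (ep : Sym2 V → N) (bp : V → Sym2 V → N) :
    Prop where
  circ_v : ∀ v : V, IsCirculantGadget G (k - 1) (minK' k) (Pv v)
  circ_e : ∀ e ∈ H.edgeSet, IsCirculantGadget G (k - 1) (minK' k) (Pe e)
  circ_ve : ∀ (v : V), ∀ e ∈ H.edgeSet, v ∈ e →
    IsCirculantGadget G (k - 1) (minK' k) (Pve v e)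
  vp_mem : ∀ v : V, vp v ∈ Pv v
  ep_mem : ∀ e ∈ H.edgeSet, ep e ∈ Pe e
  bp_mem : ∀ (v : V), ∀ e ∈ H.edgeSet, v ∈ e → bp v e ∈ Pve v e
  Ae_card : ∀ e ∈ H.edgeSet, (Ae e).card = k - 3
  Ae_clique : ∀ e ∈ H.edgeSet, ∀ a ∈ Ae e, ∀ b ∈ Ae e, a ≠ b → G.Adj a b
  disj_vv : ∀ v w : V, v ≠ w → Disjoint (Pv v) (Pv w)
  disj_ee : ∀ e ∈ H.edgeSet, ∀ f ∈ H.edgeSet, e ≠ f → Disjoint (Pe e) (Pe f)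
  disj_bb : ∀ (v : V), ∀ e ∈ H.edgeSet, v ∈ e → ∀ (w : V), ∀ f ∈ H.edgeSet, w ∈ f →
    (v, e) ≠ (w, f) → Disjoint (Pve v e) (Pve w f)
  disj_aa : ∀ e ∈ H.edgeSet, ∀ f ∈ H.edgeSet, e ≠ f → Disjoint (Ae e) (Ae f)
  disj_v_e : ∀ (v : V), ∀ e ∈ H.edgeSet, Disjoint (Pv v) (Pe e)
  disj_v_b : ∀ (v w : V), ∀ f ∈ H.edgeSet, w ∈ f → Disjoint (Pv v) (Pve w f)
  disj_v_a : ∀ (v : V), ∀ e ∈ H.edgeSet, Disjoint (Pv v) (Ae e)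
  disj_e_b : ∀ e ∈ H.edgeSet, ∀ (w : V), ∀ f ∈ H.edgeSet, w ∈ f →
    Disjoint (Pe e) (Pve w f)
  disj_e_a : ∀ e ∈ H.edgeSet, ∀ f ∈ H.edgeSet, Disjoint (Pe e) (Ae f)
  disj_b_a : ∀ (v : V), ∀ e ∈ H.edgeSet, v ∈ e → ∀ f ∈ H.edgeSet,
    Disjoint (Pve v e) (Ae f)
  cover : ∀ x : N, (∃ v : V, x ∈ Pv v) ∨ (∃ e ∈ H.edgeSet, x ∈ Pe e) ∨
    (∃ (v : V), ∃ e ∈ H.edgeSet, v ∈ e ∧ x ∈ Pve v e) ∨ (∃ e ∈ H.edgeSet, x ∈ Ae e)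
  adj_bv : ∀ (v : V), ∀ e ∈ H.edgeSet, v ∈ e → G.Adj (bp v e) (vp v)
  adj_be : ∀ (v : V), ∀ e ∈ H.edgeSet, v ∈ e → G.Adj (bp v e) (ep e)
  adj_ae : ∀ e ∈ H.edgeSet, ∀ a ∈ Ae e, G.Adj a (ep e)
  adj_ab : ∀ (v : V), ∀ e ∈ H.edgeSet, v ∈ e → ∀ a ∈ Ae e, G.Adj a (bp v e)
  adj_cases : ∀ x y : N, G.Adj x y →
    (∃ v : V, x ∈ Pv v ∧ y ∈ Pv v) ∨
    (∃ e ∈ H.edgeSet, x ∈ Pe e ∧ y ∈ Pe e) ∨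
    (∃ (v : V), ∃ e ∈ H.edgeSet, v ∈ e ∧ x ∈ Pve v e ∧ y ∈ Pve v e) ∨
    (∃ e ∈ H.edgeSet, x ∈ Ae e ∧ y ∈ Ae e) ∨
    (∃ (v : V), ∃ e ∈ H.edgeSet, v ∈ e ∧
      ((x = bp v e ∧ y = vp v) ∨ (y = bp v e ∧ x = vp v))) ∨
    (∃ (v : V), ∃ e ∈ H.edgeSet, v ∈ e ∧
      ((x = bp v e ∧ y = ep e) ∨ (y = bp v e ∧ x = ep e))) ∨
    (∃ e ∈ H.edgeSet, (x ∈ Ae e ∧ y = ep e) ∨ (y ∈ Ae e ∧ x = ep e)) ∨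
    (∃ (v : V), ∃ e ∈ H.edgeSet, v ∈ e ∧
      ((x ∈ Ae e ∧ y = bp v e) ∨ (y ∈ Ae e ∧ x = bp v e)))

/-- `Γ` is the coalition structure of the min-based reduction instance: its coalitions
are exactly the gadget player sets and the dummy sets. -/
def IsMinGamma (H : SimpleGraph V) (Pv : V → Finset N) (Pe : Sym2 V → Finset N)
    (Pve : V → Sym2 V → Finset N) (Ae : Sym2 V → Finset N)
    (Γ : CoalitionStructure N) : Prop :=
  (∀ v : V, ∀ i ∈ Pv v, Γ.part i = Pv v) ∧
  (∀ e ∈ H.edgeSet, ∀ i ∈ Pe e, Γ.part i = Pe e) ∧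
  (∀ (v : V), ∀ e ∈ H.edgeSet, v ∈ e → ∀ i ∈ Pve v e, Γ.part i = Pve v e) ∧
  (∀ e ∈ H.edgeSet, ∀ i ∈ Ae e, Γ.part i = Ae e)
end AHGDefs

section Valuations

variable {N : Type*} {G : SimpleGraph N} {C P : Finset N} {i j : N}

lemma mem_friendsIn : j ∈ friendsIn G C i ↔ j ∈ C ∧ G.Adj i j :=
  mem_filter

lemma friendsIn_subset : friendsIn G C i ⊆ C :=
  filter_subset _ _

variable [Fintype N] [DecidableEq N]

lemma fval_le_card_mul : fval G C i ≤ Fintype.card N * (friendsIn G C i).card := by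
  unfold fval
  linarith [Int.natCast_nonneg (C.filter fun j => ¬ G.Adj i j ∧ j ≠ i).card]

lemma fval_le_card_sq : fval G C i ≤ (Fintype.card N : ℤ) ^ 2 := by
  have : ((friendsIn G C i).card : ℤ) ≤ Fintype.card N := by
    exact_mod_cast card_le_univ _
  nlinarith [fval_le_card_mul (G := G) (C := C) (i := i), Int.natCast_nonneg (Fintype.card N)]

lemma lt_card_friendsIn_of_mul_lt_fval {d : ℕ} (h : (Fintype.card N : ℤ) * d < fval G C i) :
    d < (friendsIn G C i).card := by
  have := h.trans_le fval_le_card_mul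
  exact_mod_cast lt_of_mul_lt_mul_left this (Int.natCast_nonneg _)

/-- Every member of `C` other than `i` is a friend or an enemy of `i`. -/
lemma card_mul_sub_le_fval (hi : i ∈ C) :
    (Fintype.card N : ℤ) * (friendsIn G C i).card
      - (C.card - 1 - (friendsIn G C i).card) ≤ fval G C i := by
  set E := C.filter fun j => ¬ G.Adj i j ∧ j ≠ i
  have hdisj : Disjoint E (friendsIn G C i) :=
    disjoint_filter.2 fun _ _ h h' => h.1 h'
  have hi' : i ∉ E ∪ friendsIn G C i := by
    simp [E, friendsIn]
  have hsub : insert i (E ∪ friendsIn G C i) ⊆ C :=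
    insert_subset hi (union_subset (filter_subset _ _) friendsIn_subset)
  have := card_le_card hsub
  rw [card_insert_of_notMem hi', card_union_of_disjoint hdisj] at this
  unfold fval
  push_cast [E] at this ⊢
  omega

lemma utilMinEQ_le_fval_self : utilMinEQ G C i ≤ fval G C i :=
  inf'_le _ (mem_insert_self _ _)

lemma utilMinEQ_le_fval (hj : j ∈ friendsIn G C i) : utilMinEQ G C i ≤ fval G C j :=
  inf'_le _ (mem_insert_of_mem hj)

lemma le_utilMinEQ {L : ℤ} (hi : i ∈ P) (hP : ∀ p ∈ P, L ≤ fval G P p) :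
    L ≤ utilMinEQ G P i :=
  le_inf' _ _ fun _ hp => hP _ (insert_subset hi friendsIn_subset hp)

lemma utilMinAL_of_nonempty {w : ℤ} (h : (friendsIn G C i).Nonempty) :
    utilMinAL G w C i = fval G C i + w * (friendsIn G C i).inf' h (fval G C) :=
  congrArg _ (congrArg _ (dif_pos h))

lemma utilMinAL_of_eq_empty {w : ℤ} (h : friendsIn G C i = ∅) :
    utilMinAL G w C i = fval G C i := by
  simp [utilMinAL, h]

lemma le_utilMinAL {w L : ℤ} (hw : 0 ≤ w) (hi : i ∈ P) (hne : (friendsIn G P i).Nonempty)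
    (hP : ∀ p ∈ P, L ≤ fval G P p) : L + w * L ≤ utilMinAL G w P i := by
  rw [utilMinAL_of_nonempty hne]
  have : L ≤ (friendsIn G P i).inf' hne (fval G P) :=
    le_inf' _ _ fun _ hp => hP _ (friendsIn_subset hp)
  nlinarith [hP i hi]

lemma utilMinAL_le {w M : ℤ} (hw : 0 ≤ w) (hM : 0 ≤ M)
    (hC : ∀ p ∈ insert i (friendsIn G C i), fval G C p ≤ M) : utilMinAL G w C i ≤ M + w * M := by
  have hi := hC i (mem_insert_self _ _)
  rcases (friendsIn G C i).eq_empty_or_nonempty with h | h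
  · rw [utilMinAL_of_eq_empty h]
    nlinarith
  · rw [utilMinAL_of_nonempty h]
    obtain ⟨j, hj⟩ := h
    have : (friendsIn G C i).inf' ⟨j, hj⟩ (fval G C) ≤ M :=
      (inf'_le _ hj).trans (hC j (mem_insert_of_mem hj))
    nlinarith

def MinPrefers (G : SimpleGraph N) (w : ℤ) (i : N) (C P : Finset N) : Prop :=
  utilMinEQ G P i < utilMinEQ G C i ∨ utilMinAL G w P i < utilMinAL G w C i

lemma minPrefers_of_blocks {w : ℤ} {Γ : CoalitionStructure N}
    (hC : Blocks (utilMinEQ G) Γ C ∨ Blocks (utilMinAL G w) Γ C) :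
    ∀ i ∈ C, MinPrefers G w i C (Γ.part i) := by
  rcases hC with ⟨-, h⟩ | ⟨-, h⟩
  exacts [fun i hi => .inl (h i hi), fun i hi => .inr (h i hi)]

lemma le_fval_or_exists_friend_le_fval {w L : ℤ} (hw : 0 ≤ w) (hL : 0 ≤ L) (hi : i ∈ P)
    (hne : (friendsIn G P i).Nonempty) (hP : ∀ p ∈ P, L ≤ fval G P p)
    (hpref : MinPrefers G w i C P) :
    L ≤ fval G C i ∨ ∃ j ∈ friendsIn G C i, L ≤ fval G C j := by
  by_contra! h
  rcases hpref with hpref | hpref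
  · linarith [le_utilMinEQ hi hP, utilMinEQ_le_fval_self (G := G) (C := C) (i := i), h.1]
  · have := (le_utilMinAL hw hi hne hP).trans_lt hpref
    rcases (friendsIn G C i).eq_empty_or_nonempty with hC | hC
    · rw [utilMinAL_of_eq_empty hC] at this
      nlinarith [h.1]
    · rw [utilMinAL_of_nonempty hC] at this
      obtain ⟨j, hj⟩ := hC
      have : (friendsIn G C i).inf' ⟨j, hj⟩ (fval G C) ≤ L :=
        (inf'_le _ hj).trans (h.2 j hj).le
      nlinarith [h.1]

/-- Under min-AL the weight `w ≥ n²` outweighs any change of the player's own valuation. -/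
lemma le_fval_of_minPrefers {w L : ℤ} (hw : (Fintype.card N : ℤ) ^ 2 ≤ w) (hL : 0 < L)
    (hi : i ∈ P) (hne : (friendsIn G P i).Nonempty) (hP : ∀ p ∈ P, L ≤ fval G P p)
    (hpref : MinPrefers G w i C P) (hj : j ∈ friendsIn G C i) : L ≤ fval G C j := by
  by_contra! hlt
  rcases hpref with hpref | hpref
  · linarith [le_utilMinEQ hi hP, utilMinEQ_le_fval hj]
  · have hw0 : 0 ≤ w := (sq_nonneg _).trans hw
    have := (le_utilMinAL hw0 hi hne hP).trans_lt hpref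
    rw [utilMinAL_of_nonempty ⟨j, hj⟩] at this
    have : (friendsIn G C i).inf' ⟨j, hj⟩ (fval G C) ≤ L - 1 :=
      (inf'_le _ hj).trans (by omega)
    nlinarith [fval_le_card_sq (G := G) (C := C) (i := i)]

lemma not_minPrefers_of_fval_le {w M : ℤ} (hw : 0 ≤ w) (hM : 0 ≤ M) (hi : i ∈ P)
    (hne : (friendsIn G P i).Nonempty) (hP : ∀ p ∈ P, M ≤ fval G P p)
    (hC : ∀ p ∈ insert i (friendsIn G C i), fval G C p ≤ M) : ¬ MinPrefers G w i C P := by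
  rintro (h | h)
  · linarith [le_utilMinEQ hi hP, utilMinEQ_le_fval_self.trans (hC i (mem_insert_self _ _))]
  · linarith [le_utilMinAL hw hi hne hP, utilMinAL_le hw hM hC]

lemma card_mul_le_fval_of_isClique (hA : G.IsClique (P : Set N)) (hi : i ∈ P) :
    (Fintype.card N : ℤ) * (P.card - 1 : ℕ) ≤ fval G P i := by
  have hfr : friendsIn G P i = P.erase i := by
    ext j
    simp only [mem_friendsIn, mem_erase]
    exact ⟨fun h => ⟨h.2.ne', h.1⟩, fun h => ⟨h.2, hA hi h.2 (Ne.symm h.1)⟩⟩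
  have := card_mul_sub_le_fval (G := G) hi
  rw [hfr, card_erase_of_mem hi] at this
  have : 1 ≤ P.card := card_pos.2 ⟨i, hi⟩
  push_cast [this] at *
  linarith

end Valuations

section Circulant

open Fin.NatCast

variable {N : Type*} {G : SimpleGraph N} {r k' : ℕ} {P : Finset N} {g : N}

lemma cycDist_self_add [NeZero k'] (a : Fin k') {s : ℕ} (h0 : 0 < s) (hs : s < k') :
    cycDist k' a (a + s) = min (k' - s) s := by
  have ha := a.isLt
  unfold cycDist
  rw [Fin.val_add, Fin.val_cast_of_lt hs]
  rcases lt_or_ge (a + s : ℕ) k' with h | h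
  · rw [Nat.mod_eq_of_lt h, show (a : ℕ) + k' - (a + s) = k' - s by omega,
      show (a : ℕ) + s + k' - a = s + k' by omega, Nat.add_mod_right, Nat.mod_eq_of_lt hs,
      Nat.mod_eq_of_lt (by omega)]
  · rw [Nat.mod_eq_sub_mod h, Nat.mod_eq_of_lt (show (a : ℕ) + s - k' < k' by omega),
      show (a : ℕ) + k' - (a + s - k') = (k' - s) + k' by omega,
      show (a : ℕ) + s - k' + k' - a = s by omega, Nat.add_mod_right, Nat.mod_eq_of_lt hs,
      Nat.mod_eq_of_lt (show k' - s < k' by omega)]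

variable [DecidableEq N]

lemma IsCirculantGadget.card_eq (h : IsCirculantGadget G r k' P) : P.card = k' := by
  obtain ⟨f, hf, rfl, -⟩ := h
  rw [card_image_of_injective _ hf, card_univ, Fintype.card_fin]

lemma IsCirculantGadget.card_le [Fintype N] (h : IsCirculantGadget G r k' P) :
    k' ≤ Fintype.card N :=
  h.card_eq ▸ card_le_univ P

/-- The friends of the player at position `a` include those at positions `a + s` for
`s ∈ [1, r/2] ∪ [k' - r/2, k' - 1]`. -/
lemma IsCirculantGadget.le_card_friendsIn (h : IsCirculantGadget G r k' P) (hr : Even r)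
    (hrk : r < k') (hg : g ∈ P) : r ≤ (friendsIn G P g).card := by
  obtain ⟨f, hf, rfl, hadj⟩ := h
  obtain ⟨a, -, rfl⟩ := mem_image.1 hg
  obtain ⟨m, rfl⟩ := hr
  have : NeZero k' := ⟨by omega⟩
  set S := Icc 1 m ∪ Icc (k' - m) (k' - 1)
  have hS : ∀ s ∈ S, 0 < s ∧ s < k' ∧ min (k' - s) s ≤ m := by
    intro s hs
    simp only [S, mem_union, mem_Icc] at hs
    omega
  have hcard : S.card = m + m := by
    rw [card_union_of_disjoint (disjoint_left.2 fun s h1 h2 => by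
      simp only [mem_Icc] at h1 h2; omega), Nat.card_Icc, Nat.card_Icc]
    omega
  have hinj : Set.InjOn (fun s : ℕ => f (a + s)) S := by
    intro s hs t ht hst
    have := congrArg Fin.val (add_left_cancel (hf hst))
    rwa [Fin.val_cast_of_lt (hS s hs).2.1, Fin.val_cast_of_lt (hS t ht).2.1] at this
  rw [← hcard, ← card_image_of_injOn hinj]
  refine card_le_card fun x hx => ?_
  obtain ⟨s, hs, rfl⟩ := mem_image.1 hx
  obtain ⟨h0, hsk, hmin⟩ := hS s hs
  refine mem_friendsIn.2 ⟨mem_image_of_mem _ (mem_univ _), (hadj _ _).2 ⟨fun heq => ?_, ?_⟩⟩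
  · have h0' := congrArg Fin.val (left_eq_add.1 heq)
    rw [Fin.val_cast_of_lt hsk, Fin.val_zero] at h0'
    omega
  · rw [cycDist_self_add a h0 hsk]
    omega

lemma lt_minK' (k : ℕ) : k < minK' k := by
  unfold minK'
  omega

lemma IsCirculantGadget.sub_one_le_card_friendsIn
    (h : IsCirculantGadget G (k - 1) (minK' k) P) (hodd : Odd k) (hg : g ∈ P) :
    k - 1 ≤ (friendsIn G P g).card :=
  h.le_card_friendsIn (Nat.Odd.sub_odd hodd odd_one) ((k.sub_le 1).trans_lt (lt_minK' k)) hg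

variable [Fintype N]

lemma IsCirculantGadget.le_fval (h : IsCirculantGadget G r k' P) (hr : Even r) (hrk : r < k')
    (hg : g ∈ P) : (Fintype.card N : ℤ) * r - (k' - 1 - r) ≤ fval G P g := by
  have hdeg : (r : ℤ) ≤ (friendsIn G P g).card := by
    exact_mod_cast h.le_card_friendsIn hr hrk hg
  have := card_mul_sub_le_fval (G := G) hg
  rw [h.card_eq] at this
  nlinarith [Int.natCast_nonneg (Fintype.card N)]

end Circulant

section GadgetValue

variable {N : Type*} [Fintype N] [DecidableEq N] {G : SimpleGraph N} {k : ℕ} {C P : Finset N}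
  {g x : N}

/-- The valuation `n(k - 1) - (k' - k)` that each player of a `(k - 1, k')`-circulant gadget
gives to its own gadget, where it has `k - 1` friends and `k' - k` enemies. -/
def gadgetValue (n k : ℕ) : ℤ := n * ((k : ℤ) - 1) - ((minK' k : ℤ) - k)

lemma mul_lt_gadgetValue {n : ℕ} (hk : 2 ≤ k) (hn : minK' k ≤ n) :
    (n : ℤ) * (k - 2 : ℕ) < gadgetValue n k := by
  have := lt_minK' k
  unfold gadgetValue
  push_cast [hk]
  nlinarith

lemma gadgetValue_pos {n : ℕ} (hk : 2 ≤ k) (hn : minK' k ≤ n) : 0 < gadgetValue n k := by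
  have := mul_lt_gadgetValue hk hn
  have : (0 : ℤ) ≤ n * (k - 2 : ℕ) := by positivity
  omega

lemma le_card_friendsIn_of_gadgetValue_le (hk : 2 ≤ k) (hn : minK' k ≤ Fintype.card N)
    (h : gadgetValue (Fintype.card N) k ≤ fval G C x) : k - 1 ≤ (friendsIn G C x).card := by
  have := lt_card_friendsIn_of_mul_lt_fval ((mul_lt_gadgetValue hk hn).trans_le h)
  omega

lemma IsCirculantGadget.gadgetValue_le_fval (h : IsCirculantGadget G (k - 1) (minK' k) P)
    (hodd : Odd k) (hg : g ∈ P) : gadgetValue (Fintype.card N) k ≤ fval G P g := by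
  have hk : 1 ≤ k := hodd.pos
  have := h.le_fval (Nat.Odd.sub_odd hodd odd_one) ((k.sub_le 1).trans_lt (lt_minK' k)) hg
  unfold gadgetValue
  push_cast [hk] at this
  linarith

lemma le_card_friendsIn_of_minPrefers {w : ℤ} {Γ : CoalitionStructure N} (hk : 2 ≤ k)
    (hodd : Odd k) (hw : (Fintype.card N : ℤ) ^ 2 ≤ w)
    (hcirc : IsCirculantGadget G (k - 1) (minK' k) (Γ.part g))
    (hpref : MinPrefers G w g C (Γ.part g)) (hx : x ∈ friendsIn G C g) :
    k - 1 ≤ (friendsIn G C x).card := by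
  have hn := hcirc.card_le
  have hne : (friendsIn G (Γ.part g) g).Nonempty := by
    have := hcirc.sub_one_le_card_friendsIn hodd (Γ.mem_part g)
    rw [← card_pos]
    omega
  exact le_card_friendsIn_of_gadgetValue_le hk hn
    (le_fval_of_minPrefers hw (gadgetValue_pos hk hn) (Γ.mem_part g) hne
      (fun _ hp => hcirc.gadgetValue_le_fval hodd hp) hpref hx)

end GadgetValue

namespace MinReduction

variable {V N : Type*} [DecidableEq N] {H : SimpleGraph V} {k : ℕ} {G : SimpleGraph N}
  {Pv : V → Finset N} {Pe : Sym2 V → Finset N} {Pve : V → Sym2 V → Finset N}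
  {Ae : Sym2 V → Finset N} {vp : V → N} {ep : Sym2 V → N} {bp : V → Sym2 V → N}
  (R : MinReduction H k G Pv Pe Pve Ae vp ep bp) {x y : V} {C : Finset N} {i j : N}
include R

lemma adj_of_mem_Ae {e : Sym2 V} (he : e ∈ H.edgeSet) (hj : j ∈ Ae e) {p : N}
    (hadj : G.Adj j p) : p ∈ Ae e ∨ p = ep e ∨ ∃ v ∈ e, p = bp v e := by
  have hA : ∀ {f}, f ∈ H.edgeSet → j ∈ Ae f → f = e := fun hf hjf =>
    by_contra fun hne => disjoint_left.1 (R.disj_aa _ hf e he hne) hjf hj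
  rcases R.adj_cases j p hadj with
      ⟨v, hjv, -⟩ | ⟨f, hf, hjf, -⟩ | ⟨v, f, hf, hv, hjf, -⟩ | ⟨f, hf, hjf, hpf⟩ |
      ⟨v, f, hf, hv, ⟨rfl, -⟩ | ⟨-, rfl⟩⟩ | ⟨v, f, hf, hv, ⟨rfl, -⟩ | ⟨-, rfl⟩⟩ |
      ⟨f, hf, ⟨hjf, rfl⟩ | ⟨-, rfl⟩⟩ | ⟨v, f, hf, hv, ⟨hjf, rfl⟩ | ⟨-, rfl⟩⟩
  · exact absurd hj (disjoint_left.1 (R.disj_v_a v e he) hjv)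
  · exact absurd hj (disjoint_left.1 (R.disj_e_a f hf e he) hjf)
  · exact absurd hj (disjoint_left.1 (R.disj_b_a v f hf hv e he) hjf)
  · exact .inl (hA hf hjf ▸ hpf)
  · exact absurd hj (disjoint_left.1 (R.disj_b_a v f hf hv e he) (R.bp_mem v f hf hv))
  · exact absurd hj (disjoint_left.1 (R.disj_v_a v e he) (R.vp_mem v))
  · exact absurd hj (disjoint_left.1 (R.disj_b_a v f hf hv e he) (R.bp_mem v f hf hv))
  · exact absurd hj (disjoint_left.1 (R.disj_e_a f hf e he) (R.ep_mem f hf))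
  · exact .inr (.inl (by rw [hA hf hjf]))
  · exact absurd hj (disjoint_left.1 (R.disj_e_a f hf e he) (R.ep_mem f hf))
  · exact .inr (.inr ⟨v, hA hf hjf ▸ hv, by rw [hA hf hjf]⟩)
  · exact absurd hj (disjoint_left.1 (R.disj_b_a v f hf hv e he) (R.bp_mem v f hf hv))

lemma friendsIn_subset_of_mem_Ae (he : s(x, y) ∈ H.edgeSet) (hj : j ∈ Ae s(x, y)) :
    friendsIn G C j ⊆ (Ae s(x, y)).erase j ∪ {ep s(x, y), bp x s(x, y), bp y s(x, y)} := by
  intro p hp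
  obtain ⟨-, hadj⟩ := mem_friendsIn.1 hp
  rcases R.adj_of_mem_Ae he hj hadj with hpA | rfl | ⟨v, hv, rfl⟩
  · exact mem_union_left _ (mem_erase.2 ⟨hadj.ne', hpA⟩)
  · simp
  · rcases Sym2.mem_iff.1 hv with rfl | rfl <;> simp

/-- A dummy has at most `k - 1` possible friends. -/
lemma subset_of_le_card_friendsIn (he : s(x, y) ∈ H.edgeSet) (hj : j ∈ Ae s(x, y))
    (hdeg : k - 1 ≤ (friendsIn G C j).card) :
    ({ep s(x, y), bp x s(x, y), bp y s(x, y)} : Finset N) ⊆ C := by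
  have hsub := R.friendsIn_subset_of_mem_Ae (C := C) he hj
  have hcard : ((Ae s(x, y)).erase j ∪
      {ep s(x, y), bp x s(x, y), bp y s(x, y)}).card ≤ k - 1 := by
    have := card_union_le ((Ae s(x, y)).erase j) {ep s(x, y), bp x s(x, y), bp y s(x, y)}
    have := card_le_three (a := ep s(x, y)) (b := bp x s(x, y)) (c := bp y s(x, y))
    have := card_pos.2 ⟨j, hj⟩
    rw [card_erase_of_mem hj, R.Ae_card _ he] at *
    omega
  exact subset_union_right.trans
    ((eq_of_subset_of_card_le hsub (hcard.trans hdeg)).symm.subset.trans friendsIn_subset)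

variable [Fintype N] {Γ : CoalitionStructure N} (hΓ : IsMinGamma H Pv Pe Pve Ae Γ)
include hΓ

lemma isCirculantGadget_part_or_mem_Ae (i : N) :
    IsCirculantGadget G (k - 1) (minK' k) (Γ.part i) ∨ ∃ e ∈ H.edgeSet, i ∈ Ae e := by
  rcases R.cover i with ⟨v, hiv⟩ | ⟨e, he, hie⟩ | ⟨v, e, he, hve, hib⟩ | h
  · exact .inl (hΓ.1 v i hiv ▸ R.circ_v v)
  · exact .inl (hΓ.2.1 e he i hie ▸ R.circ_e e he)
  · exact .inl (hΓ.2.2.1 v e he hve i hib ▸ R.circ_ve v e he hve)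
  · exact .inr h

lemma not_isCirculantGadget_part_of_mem_Ae {e : Sym2 V} (he : e ∈ H.edgeSet) (hi : i ∈ Ae e) :
    ¬ IsCirculantGadget G (k - 1) (minK' k) (Γ.part i) := fun h => by
  have := h.card_eq
  rw [hΓ.2.2.2 e he i hi, R.Ae_card e he] at this
  have := lt_minK' k
  omega

lemma isCirculantGadget_part_ep {e : Sym2 V} (he : e ∈ H.edgeSet) :
    IsCirculantGadget G (k - 1) (minK' k) (Γ.part (ep e)) :=
  hΓ.2.1 e he _ (R.ep_mem e he) ▸ R.circ_e e he

lemma isCirculantGadget_part_bp {e : Sym2 V} {v : V} (he : e ∈ H.edgeSet) (hv : v ∈ e) :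
    IsCirculantGadget G (k - 1) (minK' k) (Γ.part (bp v e)) :=
  hΓ.2.2.1 v e he hv _ (R.bp_mem v e he hv) ▸ R.circ_ve v e he hv

lemma exists_isCirculantGadget_part_of_le_card_friendsIn (hi : i ∈ C)
    (hcirc : IsCirculantGadget G (k - 1) (minK' k) (Γ.part i)) (hj : j ∈ friendsIn G C i)
    (hdeg : k - 1 ≤ (friendsIn G C j).card) :
    ∃ g ∈ C, IsCirculantGadget G (k - 1) (minK' k) (Γ.part g) ∧ i ∈ friendsIn G C g := by
  obtain ⟨hjC, hij⟩ := mem_friendsIn.1 hj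
  rcases R.isCirculantGadget_part_or_mem_Ae hΓ j with hj' | ⟨e, he, hjA⟩
  · exact ⟨j, hjC, hj', mem_friendsIn.2 ⟨hi, hij.symm⟩⟩
  induction e using Sym2.ind with | _ x y => ?_
  have hT := R.subset_of_le_card_friendsIn he hjA hdeg
  rcases R.adj_of_mem_Ae he hjA hij.symm with hiA | rfl | ⟨v, hv, rfl⟩
  · exact absurd hcirc (R.not_isCirculantGadget_part_of_mem_Ae hΓ he hiA)
  · exact ⟨bp x s(x, y), hT (by simp), R.isCirculantGadget_part_bp hΓ he (Sym2.mem_mk_left x y),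
      mem_friendsIn.2 ⟨hi, R.adj_be x _ he (Sym2.mem_mk_left x y)⟩⟩
  · exact ⟨ep s(x, y), hT (by simp), R.isCirculantGadget_part_ep hΓ he,
      mem_friendsIn.2 ⟨hi, (R.adj_be v _ he hv).symm⟩⟩

variable {w : ℤ} (hk : 2 ≤ k) (hodd : Odd k) (hw : (Fintype.card N : ℤ) ^ 2 ≤ w)
  (hpref : ∀ p ∈ C, MinPrefers G w p C (Γ.part p))
include hk hodd hw hpref

lemma le_card_friendsIn_of_isCirculantGadget (hi : i ∈ C)
    (hcirc : IsCirculantGadget G (k - 1) (minK' k) (Γ.part i)) :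
    k - 1 ≤ (friendsIn G C i).card := by
  have hn := hcirc.card_le
  have hne : (friendsIn G (Γ.part i) i).Nonempty := by
    have := hcirc.sub_one_le_card_friendsIn hodd (Γ.mem_part i)
    rw [← card_pos]
    omega
  rcases le_fval_or_exists_friend_le_fval ((sq_nonneg _).trans hw) (gadgetValue_pos hk hn).le
      (Γ.mem_part i) hne (fun _ hp => hcirc.gadgetValue_le_fval hodd hp) (hpref i hi) with
    h | ⟨j, hj, hjv⟩
  · exact le_card_friendsIn_of_gadgetValue_le hk hn h
  · obtain ⟨g, hgC, hg, hig⟩ := R.exists_isCirculantGadget_part_of_le_card_friendsIn hΓ hi hcirc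
      hj (le_card_friendsIn_of_gadgetValue_le hk hn hjv)
    exact le_card_friendsIn_of_minPrefers hk hodd hw hg (hpref g hgC) hig

lemma le_card_friendsIn_of_mem_Ae (hi : i ∈ C) {e : Sym2 V} (he : e ∈ H.edgeSet)
    (hiA : i ∈ Ae e) : k - 1 ≤ (friendsIn G C i).card := by
  induction e using Sym2.ind with | _ x y => ?_
  by_cases hT : ∃ g ∈ ({ep s(x, y), bp x s(x, y), bp y s(x, y)} : Finset N), g ∈ C
  · obtain ⟨g, hgT, hgC⟩ := hT
    have hg : IsCirculantGadget G (k - 1) (minK' k) (Γ.part g) ∧ G.Adj g i := by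
      simp only [mem_insert, mem_singleton] at hgT
      rcases hgT with rfl | rfl | rfl
      · exact ⟨R.isCirculantGadget_part_ep hΓ he, (R.adj_ae _ he i hiA).symm⟩
      · exact ⟨R.isCirculantGadget_part_bp hΓ he (Sym2.mem_mk_left x y),
          (R.adj_ab _ _ he (Sym2.mem_mk_left x y) i hiA).symm⟩
      · exact ⟨R.isCirculantGadget_part_bp hΓ he (Sym2.mem_mk_right x y),
          (R.adj_ab _ _ he (Sym2.mem_mk_right x y) i hiA).symm⟩
    exact le_card_friendsIn_of_minPrefers hk hodd hw hg.1 (hpref g hgC)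
      (mem_friendsIn.2 ⟨hi, hg.2⟩)
  push Not at hT
  exfalso
  set A := Ae s(x, y)
  have hsub : ∀ p ∈ A, friendsIn G C p ⊆ A.erase p := fun p hp q hq =>
    (mem_union.1 (R.friendsIn_subset_of_mem_Ae he hp hq)).resolve_right
      fun hqT => hT q hqT (friendsIn_subset hq)
  have hA : 2 ≤ A.card := by
    have := card_pos.2 ⟨i, hiA⟩
    rw [R.Ae_card _ he] at this ⊢
    obtain ⟨m, rfl⟩ := hodd
    omega
  have hne : (friendsIn G A i).Nonempty := by
    obtain ⟨a, ha, hai⟩ := exists_mem_ne hA i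
    exact ⟨a, mem_friendsIn.2 ⟨ha, R.Ae_clique _ he i hiA a ha (Ne.symm hai)⟩⟩
  have hC : ∀ p ∈ insert i (friendsIn G C i),
      fval G C p ≤ Fintype.card N * (A.card - 1 : ℕ) := by
    intro p hp
    have hpA : p ∈ A := by
      rcases mem_insert.1 hp with rfl | hp
      exacts [hiA, mem_of_mem_erase (hsub i hiA hp)]
    have := card_le_card (hsub p hpA)
    rw [card_erase_of_mem hpA] at this
    exact fval_le_card_mul.trans (by gcongr)
  refine not_minPrefers_of_fval_le ((sq_nonneg _).trans hw) (by positivity) hiA hne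
    (fun p hp => card_mul_le_fval_of_isClique (R.Ae_clique _ he) hp) hC ?_
  have hpart : Γ.part i = A := hΓ.2.2.2 _ he i hiA
  exact hpart ▸ hpref i hi

end MinReduction

theorem min_blocking_min_degree_general {V N : Type*}
    [Fintype N] [DecidableEq N]
    (H : SimpleGraph V) (k : ℕ) (hk : 3 ≤ k) (hodd : Odd k)
    (G : SimpleGraph N) (Pv : V → Finset N) (Pe : Sym2 V → Finset N)
    (Pve : V → Sym2 V → Finset N) (Ae : Sym2 V → Finset N)
    (vp : V → N) (ep : Sym2 V → N) (bp : V → Sym2 V → N)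
    (R : MinReduction H k G Pv Pe Pve Ae vp ep bp)
    (w : ℤ) (hw : (Fintype.card N : ℤ) ^ 4 ≤ w)
    (Γ : CoalitionStructure N) (hΓ : IsMinGamma H Pv Pe Pve Ae Γ)
    (C : Finset N)
    (hC : Blocks (utilMinEQ G) Γ C ∨ Blocks (utilMinAL G w) Γ C) :
    ∀ i ∈ C, k - 1 ≤ (friendsIn G C i).card := by
  intro i hi
  have hk2 : 2 ≤ k := by omega
  have hw2 : (Fintype.card N : ℤ) ^ 2 ≤ w :=
    (pow_le_pow_right₀ (Nat.one_le_cast.2 (Fintype.card_pos_iff.2 ⟨i⟩)) (by norm_num)).trans hw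
  have hpref := minPrefers_of_blocks hC
  rcases R.isCirculantGadget_part_or_mem_Ae hΓ i with hcirc | ⟨e, he, hiA⟩
  · exact R.le_card_friendsIn_of_isCirculantGadget hΓ hk2 hodd hw2 hpref hi hcirc
  · exact R.le_card_friendsIn_of_mem_Ae hΓ hk2 hodd hw2 hpref hi he hiA

/-- Claim 2: in the min-based reduction instance, under min-EQ or min-AL utilities
(with weight `w ≥ n^4`), every player of a coalition `C` blocking `Γ` has at least
`k − 1` friends in `C`. -/
theorem min_blocking_min_degree {V N : Type*}
    [Fintype V] [DecidableEq V] [Fintype N] [DecidableEq N]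
    (H : SimpleGraph V) (k : ℕ) (hk : 3 ≤ k) (hodd : Odd k)
    (G : SimpleGraph N) (Pv : V → Finset N) (Pe : Sym2 V → Finset N)
    (Pve : V → Sym2 V → Finset N) (Ae : Sym2 V → Finset N)
    (vp : V → N) (ep : Sym2 V → N) (bp : V → Sym2 V → N)
    (R : MinReduction H k G Pv Pe Pve Ae vp ep bp)
    (w : ℤ) (hw : (Fintype.card N : ℤ) ^ 4 ≤ w)
    (Γ : CoalitionStructure N) (hΓ : IsMinGamma H Pv Pe Pve Ae Γ)
    (C : Finset N)
    (hC : Blocks (utilMinEQ G) Γ C ∨ Blocks (utilMinAL G w) Γ C) :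
    ∀ i ∈ C, k - 1 ≤ (friendsIn G C i).card :=
  min_blocking_min_degree_general H k hk hodd G Pv Pe Pve Ae vp ep bp R w hw Γ hΓ C hC
end

section
/- In the min-based reduction instance built from a simple graph H = (V, E) and an odd integer k ≥ 3, suppose K ⊆ V is a clique of size k in H. Let C consist of the vertex players v' for v ∈ K, the edge players e' for all edges e of H with both endpoints in K, the incidence players b_{x,e} and b_{y,e} for each such edge e = xy, and all dummy players of A_e for each such edge e. Then |C| = k + k·(k choose 2), every player i ∈ C satisfies util_i(C) = (k−1)·n − (|C| − k) under min-EQ utilities, and C blocks the coalition structure Γ both under min-EQ utilities and under min-AL utilities with any fixed weight w ≥ n^4. -/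
open Finset
open scoped Classical

/-!
Every member of the clique coalition `C` has exactly `k - 1` friends in `C`: a vertex player
`v'` is adjacent to the `k - 1` incidence players `b_{v,e}` of the clique edges at `v`; an edge
player `e'` to its two incidence players and its `k - 3` dummies; `b_{v,e}` to `v'`, `e'` and the
dummies of `e`; a dummy to `e'`, the two incidence players of `e` and the other dummies. Hence all
valuations in `C` equal `M = (k - 1)n - (|C| - k)`, and so do both min-based utilities (up to the
factor `1 + w`). In `Γ`, every player lies either in a circulant gadget, where everyone has `k - 1`
friends among `k' = |C| + 1` players and so values `M - 1`, or in a dummy clique, valued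
`(k - 4)n < M` because `|C| ≤ n`. As `w ≥ 0`, every member of `C` strictly gains.
-/

section Valuations

variable {N : Type*} [DecidableEq N] {G : SimpleGraph N} {C : Finset N} {i : N}

lemma cycDist_eq_min_sub {k' : ℕ} (a b : Fin k') :
    cycDist k' a b = min (a - b).val (b - a).val := by
  unfold cycDist
  rw [Fin.val_sub, Fin.val_sub]
  congr 2 <;> omega

lemma card_filter_ne_zero_min_neg_le {k' d : ℕ} [NeZero k'] (h : 2 * d < k') :
    #{m : Fin k' | m ≠ 0 ∧ min (-m).val m.val ≤ d} = 2 * d := by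
  have hneg : ∀ m : Fin k', m ≠ 0 → (-m).val = k' - m.val := fun m hm => by
    rw [Fin.val_neg', Nat.mod_eq_of_lt (by have := Fin.pos_iff_ne_zero.2 hm; omega)]
  have hS : #(Icc 1 d ∪ Icc (k' - d) (k' - 1)) = 2 * d := by
    rw [card_union_of_disjoint (disjoint_left.2 fun x hx hx' => by simp at hx hx'; omega),
      Nat.card_Icc, Nat.card_Icc]
    omega
  rw [← hS]
  refine card_nbij (fun m => m.val) (fun m hm => ?_) (fun m _ m' _ h => Fin.ext h) ?_
  · simp only [coe_filter, Set.mem_ofPred_eq, mem_univ, true_and] at hm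
    have := hneg m hm.1
    have := m.isLt
    have := Fin.pos_iff_ne_zero.2 hm.1
    simp only [coe_union, coe_Icc, Set.mem_union, Set.mem_Icc]
    omega
  · intro x hx
    simp only [coe_union, coe_Icc, Set.mem_union, Set.mem_Icc] at hx
    have hm0 : (⟨x, by omega⟩ : Fin k') ≠ 0 := fun h => by
      have := congrArg Fin.val h; simp at this; omega
    refine ⟨⟨x, by omega⟩, ?_, rfl⟩
    simp only [coe_filter, Set.mem_ofPred_eq, mem_univ, true_and, hneg _ hm0]
    exact ⟨hm0, by omega⟩

lemma card_filter_cycDist_le {k' d : ℕ} (h : 2 * d < k') (a : Fin k') :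
    #{b : Fin k' | b ≠ a ∧ cycDist k' a b ≤ d} = 2 * d := by
  have : NeZero k' := ⟨by omega⟩
  rw [← card_filter_ne_zero_min_neg_le h]
  refine card_equiv (Equiv.subRight a) fun b => ?_
  simp only [mem_filter, mem_univ, true_and, Equiv.subRight_apply, cycDist_eq_min_sub,
    sub_ne_zero, neg_sub]

lemma IsCirculantGadget.card {r k' : ℕ} {P : Finset N} (hP : IsCirculantGadget G r k' P) :
    #P = k' := by
  obtain ⟨f, hinj, rfl, -⟩ := hP
  rw [card_image_of_injective _ hinj, card_univ, Fintype.card_fin]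

lemma IsCirculantGadget.card_friendsIn {r k' : ℕ} {P : Finset N}
    (hP : IsCirculantGadget G r k' P) (hr : Even r) (hrk : r < k') (hi : i ∈ P) :
    #(friendsIn G P i) = r := by
  obtain ⟨f, hinj, rfl, hadj⟩ := hP
  obtain ⟨a, -, rfl⟩ := mem_image.1 hi
  have hfr : friendsIn G (univ.image f) (f a) =
      image f {b | b ≠ a ∧ cycDist k' a b ≤ r / 2} := by
    rw [friendsIn, filter_image]
    congr 1
    ext b
    simp [hadj, eq_comm]
  rw [hfr, card_image_of_injective _ hinj, card_filter_cycDist_le (by omega)]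
  exact Nat.two_mul_div_two_of_even hr

lemma friendsIn_of_isClique {P : Finset N} (hP : G.IsClique (P : Set N)) (hi : i ∈ P) :
    friendsIn G P i = P.erase i := by
  ext j
  simp only [friendsIn, mem_filter, mem_erase]
  exact ⟨fun ⟨hj, hadj⟩ => ⟨hadj.ne', hj⟩, fun ⟨hne, hj⟩ => ⟨hj, hP hi hj hne.symm⟩⟩

variable [Fintype N]

lemma fval_eq_of_mem (hi : i ∈ C) :
    fval G C i = (Fintype.card N : ℤ) * #(friendsIn G C i) - (#C - 1 - #(friendsIn G C i)) := by
  have hnotin : i ∉ friendsIn G C i := by simp [friendsIn]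
  have hsub : insert i (friendsIn G C i) ⊆ C := insert_subset hi (filter_subset _ _)
  have henemies : C.filter (fun j => ¬ G.Adj i j ∧ j ≠ i) = C \ insert i (friendsIn G C i) := by
    ext j
    simp only [mem_filter, mem_sdiff, mem_insert, friendsIn]
    tauto
  have hcard := card_sdiff_add_card_eq_card hsub
  rw [card_insert_of_notMem hnotin] at hcard
  rw [fval, henemies]
  omega

lemma IsCirculantGadget.fval_eq {r k' : ℕ} {P : Finset N} (hP : IsCirculantGadget G r k' P)
    (hr : Even r) (hrk : r < k') (hi : i ∈ P) :
    fval G P i = (Fintype.card N : ℤ) * r - (k' - 1 - r) := by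
  rw [fval_eq_of_mem hi, hP.card_friendsIn hr hrk hi, hP.card]

lemma fval_eq_of_isClique {P : Finset N} (hP : G.IsClique (P : Set N)) (hi : i ∈ P) :
    fval G P i = (Fintype.card N : ℤ) * (#P - 1) := by
  rw [fval_eq_of_mem hi, friendsIn_of_isClique hP hi, card_erase_of_mem hi,
    Nat.cast_pred (card_pos.2 ⟨i, hi⟩)]
  ring

lemma utilMinEQ_eq_of_forall_fval_eq {m : ℤ} (h : ∀ c ∈ C, fval G C c = m) (hi : i ∈ C) :
    utilMinEQ G C i = m := by
  have hle : ∀ c ∈ insert i (friendsIn G C i), fval G C c = m := fun c hc =>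
    h c (insert_subset hi (filter_subset _ _) hc)
  exact le_antisymm ((inf'_le _ (mem_insert_self _ _)).trans_eq (hle i (mem_insert_self _ _)))
    (le_inf' _ _ fun c hc => (hle c hc).ge)

lemma utilMinAL_eq_of_forall_fval_eq {m : ℤ} (w : ℤ) (h : ∀ c ∈ C, fval G C c = m)
    (hi : i ∈ C) (hfr : (friendsIn G C i).Nonempty) : utilMinAL G w C i = m + w * m := by
  obtain ⟨c, hc⟩ := hfr
  have hle : ∀ c ∈ friendsIn G C i, fval G C c = m := fun c hc => h c (filter_subset _ _ hc)
  rw [utilMinAL, dif_pos ⟨c, hc⟩, h i hi,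
    le_antisymm ((inf'_le _ hc).trans_eq (hle c hc)) (le_inf' _ _ fun c hc => (hle c hc).ge)]

lemma blocks_of_forall_fval_lt {Γ : CoalitionStructure N} {M w : ℤ} (hw : 0 ≤ w)
    (hne : C.Nonempty) (hC : ∀ c ∈ C, fval G C c = M)
    (hfr : ∀ c ∈ C, (friendsIn G C c).Nonempty)
    (hΓ : ∀ i ∈ C, ∃ m < M, (∀ c ∈ Γ.part i, fval G (Γ.part i) c = m) ∧
      (friendsIn G (Γ.part i) i).Nonempty) :
    Blocks (utilMinEQ G) Γ C ∧ Blocks (utilMinAL G w) Γ C := by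
  refine ⟨⟨hne, fun i hi => ?_⟩, ⟨hne, fun i hi => ?_⟩⟩ <;>
    obtain ⟨m, hm, hΓm, hΓfr⟩ := hΓ i hi
  · rw [utilMinEQ_eq_of_forall_fval_eq hΓm (Γ.mem_part i), utilMinEQ_eq_of_forall_fval_eq hC hi]
    exact hm
  · rw [utilMinAL_eq_of_forall_fval_eq w hΓm (Γ.mem_part i) hΓfr,
      utilMinAL_eq_of_forall_fval_eq w hC hi (hfr i hi)]
    nlinarith

end Valuations

section CliqueCoalition

variable {V N : Type*} [Fintype V] [DecidableEq V] {H : SimpleGraph V} {K : Finset V}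

noncomputable def cliqueEdges (H : SimpleGraph V) (K : Finset V) : Finset (Sym2 V) :=
  H.edgeFinset.filter fun e => ∀ v ∈ e, v ∈ K

lemma mem_cliqueEdges {e : Sym2 V} :
    e ∈ cliqueEdges H K ↔ e ∈ H.edgeSet ∧ ∀ v ∈ e, v ∈ K := by
  simp [cliqueEdges]

lemma cliqueEdges_eq_image_offDiag (hK : H.IsClique (K : Set V)) :
    cliqueEdges H K = K.offDiag.image Sym2.mk.uncurry := by
  ext e
  induction e using Sym2.ind with
  | _ x y =>
    simp only [mem_cliqueEdges, SimpleGraph.mem_edgeSet, Sym2.mem_iff, forall_eq_or_imp,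
      forall_eq, mem_image, mem_offDiag, Prod.exists, Function.uncurry_apply_pair, Sym2.eq_iff]
    constructor
    · rintro ⟨hxy, hx, hy⟩
      exact ⟨x, y, ⟨hx, hy, hxy.ne⟩, Or.inl ⟨rfl, rfl⟩⟩
    · rintro ⟨a, b, ⟨ha, hb, hab⟩, ⟨rfl, rfl⟩ | ⟨rfl, rfl⟩⟩
      exacts [⟨hK ha hb hab, ha, hb⟩, ⟨hK hb ha (Ne.symm hab), hb, ha⟩]

lemma card_cliqueEdges {k : ℕ} (hK : H.IsNClique k K) : #(cliqueEdges H K) = k.choose 2 := by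
  rw [cliqueEdges_eq_image_offDiag hK.isClique, Sym2.card_image_offDiag, hK.card_eq]

lemma exists_eq_mk_of_mem_cliqueEdges {e : Sym2 V} {v : V} (he : e ∈ cliqueEdges H K)
    (hv : v ∈ e) : ∃ u ∈ K.erase v, e = s(v, u) := by
  obtain ⟨u, rfl⟩ := Sym2.mem_iff_exists.1 hv
  obtain ⟨hadj, hK⟩ := mem_cliqueEdges.1 he
  exact ⟨u, mem_erase.2 ⟨(H.ne_of_adj hadj).symm, hK u (Sym2.mem_mk_right v u)⟩, rfl⟩

lemma mk_mem_cliqueEdges (hK : H.IsClique (K : Set V)) {u v : V} (hv : v ∈ K)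
    (hu : u ∈ K.erase v) : s(v, u) ∈ cliqueEdges H K := by
  obtain ⟨huv, hu⟩ := mem_erase.1 hu
  rw [cliqueEdges_eq_image_offDiag hK]
  exact mem_image.2 ⟨(v, u), mem_offDiag.2 ⟨hv, hu, huv.symm⟩, rfl⟩

variable [DecidableEq N]

def edgeFriends (bp : V → Sym2 V → N) (Ae : Sym2 V → Finset N) (e : Sym2 V) : Finset N :=
  (univ.filter fun v : V => v ∈ e).image (fun v => bp v e) ∪ Ae e

noncomputable def cliqueCoalition (H : SimpleGraph V) (K : Finset V) (vp : V → N)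
    (ep : Sym2 V → N) (bp : V → Sym2 V → N) (Ae : Sym2 V → Finset N) : Finset N :=
  K.image vp ∪ (cliqueEdges H K).image ep ∪ (cliqueEdges H K).biUnion (edgeFriends bp Ae)

variable {vp : V → N} {ep : Sym2 V → N} {bp : V → Sym2 V → N} {Ae : Sym2 V → Finset N}

lemma mem_edgeFriends {e : Sym2 V} {j : N} :
    j ∈ edgeFriends bp Ae e ↔ (∃ v ∈ e, bp v e = j) ∨ j ∈ Ae e := by
  simp [edgeFriends]

lemma edgeFriends_mk (x y : V) :
    edgeFriends bp Ae s(x, y) = insert (bp x s(x, y)) (insert (bp y s(x, y)) (Ae s(x, y))) := by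
  ext j
  simp [edgeFriends, or_assoc, eq_comm]

lemma mem_cliqueCoalition {j : N} :
    j ∈ cliqueCoalition H K vp ep bp Ae ↔ (∃ v ∈ K, vp v = j) ∨
      (∃ e ∈ cliqueEdges H K, ep e = j) ∨ ∃ e ∈ cliqueEdges H K, j ∈ edgeFriends bp Ae e := by
  simp [cliqueCoalition]

lemma vp_mem_cliqueCoalition {v : V} (hv : v ∈ K) : vp v ∈ cliqueCoalition H K vp ep bp Ae :=
  mem_cliqueCoalition.2 (Or.inl ⟨v, hv, rfl⟩)

lemma ep_mem_cliqueCoalition {e : Sym2 V} (he : e ∈ cliqueEdges H K) :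
    ep e ∈ cliqueCoalition H K vp ep bp Ae :=
  mem_cliqueCoalition.2 (Or.inr (Or.inl ⟨e, he, rfl⟩))

lemma mem_cliqueCoalition_of_mem_edgeFriends {e : Sym2 V} {j : N} (he : e ∈ cliqueEdges H K)
    (hj : j ∈ edgeFriends bp Ae e) : j ∈ cliqueCoalition H K vp ep bp Ae :=
  mem_cliqueCoalition.2 (Or.inr (Or.inr ⟨e, he, hj⟩))

end CliqueCoalition

namespace MinReduction

/-- The player sets of the reduction partition `N` (fields `cover` and `disj_*`), so each player
lies in exactly one block, `blockOf`; disjointness arguments then become injectivity of the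
constructors of `Block`. -/
inductive Block (V : Type*)
  | vertex (v : V)
  | edge (e : Sym2 V)
  | incidence (v : V) (e : Sym2 V)
  | dummy (e : Sym2 V)

namespace Block

variable {V N : Type*}

def IsValid (H : SimpleGraph V) : Block V → Prop
  | vertex _ => True
  | edge e => e ∈ H.edgeSet
  | incidence v e => e ∈ H.edgeSet ∧ v ∈ e
  | dummy e => e ∈ H.edgeSet

def players (Pv : V → Finset N) (Pe : Sym2 V → Finset N) (Pve : V → Sym2 V → Finset N)
    (Ae : Sym2 V → Finset N) : Block V → Finset N
  | vertex v => Pv v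
  | edge e => Pe e
  | incidence v e => Pve v e
  | dummy e => Ae e

end Block

open Block

variable {V N : Type*} [DecidableEq N] {H : SimpleGraph V} {k : ℕ} {G : SimpleGraph N}
  {Pv : V → Finset N} {Pe : Sym2 V → Finset N} {Pve : V → Sym2 V → Finset N}
  {Ae : Sym2 V → Finset N} {vp : V → N} {ep : Sym2 V → N} {bp : V → Sym2 V → N}

lemma disjoint_players (R : MinReduction H k G Pv Pe Pve Ae vp ep bp) {p q : Block V}
    (hp : p.IsValid H) (hq : q.IsValid H) (hpq : p ≠ q) :
    Disjoint (p.players Pv Pe Pve Ae) (q.players Pv Pe Pve Ae) := by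
  cases p <;> cases q <;> simp only [IsValid, players, ne_eq, reduceCtorEq, not_false_eq_true,
    vertex.injEq, edge.injEq, incidence.injEq, dummy.injEq] at hp hq hpq ⊢
  all_goals first
    | exact R.disj_vv _ _ hpq | exact R.disj_ee _ hp _ hq hpq
    | exact R.disj_bb _ _ hp.1 hp.2 _ _ hq.1 hq.2 (by simpa using hpq)
    | exact R.disj_aa _ hp _ hq hpq
    | exact R.disj_v_e _ _ hq | exact (R.disj_v_e _ _ hp).symm
    | exact R.disj_v_b _ _ _ hq.1 hq.2 | exact (R.disj_v_b _ _ _ hp.1 hp.2).symm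
    | exact R.disj_v_a _ _ hq | exact (R.disj_v_a _ _ hp).symm
    | exact R.disj_e_b _ hp _ _ hq.1 hq.2 | exact (R.disj_e_b _ hq _ _ hp.1 hp.2).symm
    | exact R.disj_e_a _ hp _ hq | exact (R.disj_e_a _ hq _ hp).symm
    | exact R.disj_b_a _ _ hp.1 hp.2 _ hq | exact (R.disj_b_a _ _ hq.1 hq.2 _ hp).symm

lemma exists_block (R : MinReduction H k G Pv Pe Pve Ae vp ep bp) (x : N) :
    ∃ p : Block V, p.IsValid H ∧ x ∈ p.players Pv Pe Pve Ae := by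
  rcases R.cover x with ⟨v, hx⟩ | ⟨e, he, hx⟩ | ⟨v, e, he, hv, hx⟩ | ⟨e, he, hx⟩
  exacts [⟨vertex v, trivial, hx⟩, ⟨edge e, he, hx⟩, ⟨incidence v e, ⟨he, hv⟩, hx⟩,
    ⟨dummy e, he, hx⟩]

noncomputable def blockOf (R : MinReduction H k G Pv Pe Pve Ae vp ep bp) (x : N) : Block V :=
  (R.exists_block x).choose

variable (R : MinReduction H k G Pv Pe Pve Ae vp ep bp)
include R

lemma isValid_blockOf (x : N) : (R.blockOf x).IsValid H :=
  (R.exists_block x).choose_spec.1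

lemma mem_players_iff {p : Block V} (hp : p.IsValid H) {x : N} :
    x ∈ p.players Pv Pe Pve Ae ↔ R.blockOf x = p := by
  refine ⟨fun h => ?_, fun h => h ▸ (R.exists_block x).choose_spec.2⟩
  by_contra hne
  exact disjoint_left.1 (R.disjoint_players (R.isValid_blockOf x) hp hne)
    (R.exists_block x).choose_spec.2 h

lemma mem_Pv_iff {v : V} {x : N} : x ∈ Pv v ↔ R.blockOf x = vertex v :=
  R.mem_players_iff (p := vertex v) trivial

lemma mem_Pe_iff {e : Sym2 V} (he : e ∈ H.edgeSet) {x : N} :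
    x ∈ Pe e ↔ R.blockOf x = edge e :=
  R.mem_players_iff (p := edge e) he

lemma mem_Pve_iff {v : V} {e : Sym2 V} (he : e ∈ H.edgeSet) (hv : v ∈ e) {x : N} :
    x ∈ Pve v e ↔ R.blockOf x = incidence v e :=
  R.mem_players_iff (p := incidence v e) ⟨he, hv⟩

lemma mem_Ae_iff {e : Sym2 V} (he : e ∈ H.edgeSet) {x : N} :
    x ∈ Ae e ↔ R.blockOf x = dummy e :=
  R.mem_players_iff (p := dummy e) he

lemma blockOf_vp (v : V) : R.blockOf (vp v) = vertex v :=
  R.mem_Pv_iff.1 (R.vp_mem v)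

lemma blockOf_ep {e : Sym2 V} (he : e ∈ H.edgeSet) : R.blockOf (ep e) = edge e :=
  (R.mem_Pe_iff he).1 (R.ep_mem e he)

lemma blockOf_bp {v : V} {e : Sym2 V} (he : e ∈ H.edgeSet) (hv : v ∈ e) :
    R.blockOf (bp v e) = incidence v e :=
  (R.mem_Pve_iff he hv).1 (R.bp_mem v e he hv)

lemma adj_vp {v : V} {j : N} (h : G.Adj (vp v) j) :
    R.blockOf j = vertex v ∨ ∃ e ∈ H.edgeSet, v ∈ e ∧ j = bp v e := by
  -- with `vp v` generalised, `aesop` can substitute the equations given by `adj_cases`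
  generalize hx : vp v = x at h
  replace hx := congrArg R.blockOf hx
  have := R.adj_cases _ _ h
  aesop (add simp [R.mem_Pv_iff, R.mem_Pe_iff, R.mem_Pve_iff, R.mem_Ae_iff, R.blockOf_vp,
    R.blockOf_ep, R.blockOf_bp])

lemma adj_ep {e : Sym2 V} (he : e ∈ H.edgeSet) {j : N} (h : G.Adj (ep e) j) :
    R.blockOf j = edge e ∨ (∃ v ∈ e, j = bp v e) ∨ R.blockOf j = dummy e := by
  generalize hx : ep e = x at h
  replace hx := congrArg R.blockOf hx
  have := R.adj_cases _ _ h
  aesop (add simp [R.mem_Pv_iff, R.mem_Pe_iff, R.mem_Pve_iff, R.mem_Ae_iff, R.blockOf_vp,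
    R.blockOf_ep, R.blockOf_bp])

lemma adj_bp {v : V} {e : Sym2 V} (he : e ∈ H.edgeSet) (hv : v ∈ e) {j : N}
    (h : G.Adj (bp v e) j) :
    R.blockOf j = incidence v e ∨ j = vp v ∨ j = ep e ∨ R.blockOf j = dummy e := by
  generalize hx : bp v e = x at h
  replace hx := congrArg R.blockOf hx
  have := R.adj_cases _ _ h
  aesop (add simp [R.mem_Pv_iff, R.mem_Pe_iff, R.mem_Pve_iff, R.mem_Ae_iff, R.blockOf_vp,
    R.blockOf_ep, R.blockOf_bp])

lemma adj_dummy {e : Sym2 V} (he : e ∈ H.edgeSet) {a j : N} (ha : a ∈ Ae e) (h : G.Adj a j) :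
    R.blockOf j = dummy e ∨ j = ep e ∨ ∃ v ∈ e, j = bp v e := by
  have := R.adj_cases _ _ h
  aesop (add simp [R.mem_Pv_iff, R.mem_Pe_iff, R.mem_Pve_iff, R.mem_Ae_iff, R.blockOf_vp,
    R.blockOf_ep, R.blockOf_bp])

lemma bp_inj {v w : V} {e f : Sym2 V} (he : e ∈ H.edgeSet) (hv : v ∈ e) (hf : f ∈ H.edgeSet)
    (hw : w ∈ f) : bp v e = bp w f ↔ v = w ∧ e = f :=
  ⟨fun h => by simpa [R.blockOf_bp, he, hv, hf, hw] using congrArg R.blockOf h,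
    by rintro ⟨rfl, rfl⟩; rfl⟩

lemma blockOf_of_mem_edgeFriends [Fintype V] [DecidableEq V] {e : Sym2 V} (he : e ∈ H.edgeSet)
    {x : N} (hx : x ∈ edgeFriends bp Ae e) :
    (∃ v ∈ e, R.blockOf x = incidence v e) ∨ R.blockOf x = dummy e := by
  rcases mem_edgeFriends.1 hx with ⟨v, hv, rfl⟩ | hx
  · exact Or.inl ⟨v, hv, R.blockOf_bp he hv⟩
  · exact Or.inr ((R.mem_Ae_iff he).1 hx)

lemma card_edgeFriends [Fintype V] [DecidableEq V] (hk : 3 ≤ k) {e : Sym2 V}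
    (he : e ∈ H.edgeSet) : #(edgeFriends bp Ae e) = k - 1 := by
  induction e using Sym2.ind with
  | _ x y =>
  have hx : x ∈ s(x, y) := Sym2.mem_mk_left x y
  have hy : y ∈ s(x, y) := Sym2.mem_mk_right x y
  rw [edgeFriends_mk, card_insert_of_notMem, card_insert_of_notMem, R.Ae_card _ he]
  · omega
  · simp [R.mem_Ae_iff he, R.blockOf_bp he hy]
  · simp [R.mem_Ae_iff he, R.blockOf_bp he hx, R.bp_inj he hx he hy, H.ne_of_adj he]

lemma part_eq_players [Fintype N] {Γ : CoalitionStructure N}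
    (hΓ : IsMinGamma H Pv Pe Pve Ae Γ) (x : N) :
    Γ.part x = (R.blockOf x).players Pv Pe Pve Ae := by
  have hp := R.isValid_blockOf x
  have hx : x ∈ (R.blockOf x).players Pv Pe Pve Ae := (R.mem_players_iff hp).2 rfl
  generalize R.blockOf x = p at hx hp ⊢
  obtain ⟨hv, he, hb, ha⟩ := hΓ
  cases p with
  | vertex v => exact hv v x hx
  | edge e => exact he e hp x hx
  | incidence v e => exact hb v e hp.1 hp.2 x hx
  | dummy e => exact ha e hp x hx

lemma isCirculantGadget_or_eq_Ae [Fintype N] {Γ : CoalitionStructure N}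
    (hΓ : IsMinGamma H Pv Pe Pve Ae Γ) (x : N) :
    IsCirculantGadget G (k - 1) (minK' k) (Γ.part x) ∨ ∃ e ∈ H.edgeSet, Γ.part x = Ae e := by
  rw [R.part_eq_players hΓ]
  have hp := R.isValid_blockOf x
  generalize R.blockOf x = p at hp ⊢
  cases p with
  | vertex v => exact Or.inl (R.circ_v v)
  | edge e => exact Or.inl (R.circ_e e hp)
  | incidence v e => exact Or.inl (R.circ_ve v e hp.1 hp.2)
  | dummy e => exact Or.inr ⟨e, hp, rfl⟩

section CliqueCoalition

variable [Fintype V] [DecidableEq V] {K : Finset V}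

lemma blockOf_of_mem_cliqueCoalition {j : N} (hj : j ∈ cliqueCoalition H K vp ep bp Ae) :
    (∃ v ∈ K, j = vp v ∧ R.blockOf j = vertex v) ∨
    (∃ e ∈ cliqueEdges H K, j = ep e ∧ R.blockOf j = edge e) ∨
    (∃ e ∈ cliqueEdges H K, ∃ v ∈ e, j = bp v e ∧ R.blockOf j = incidence v e) ∨
    ∃ e ∈ cliqueEdges H K, R.blockOf j = dummy e := by
  rcases mem_cliqueCoalition.1 hj with ⟨v, hv, rfl⟩ | ⟨e, he, rfl⟩ | ⟨e, he, hje⟩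
  · exact Or.inl ⟨v, hv, rfl, R.blockOf_vp v⟩
  · exact Or.inr (Or.inl ⟨e, he, rfl, R.blockOf_ep (mem_cliqueEdges.1 he).1⟩)
  · rcases mem_edgeFriends.1 hje with ⟨v, hv, rfl⟩ | hje
    · exact Or.inr (Or.inr (Or.inl ⟨e, he, v, hv, rfl, R.blockOf_bp (mem_cliqueEdges.1 he).1 hv⟩))
    · exact Or.inr (Or.inr (Or.inr ⟨e, he, (R.mem_Ae_iff (mem_cliqueEdges.1 he).1).1 hje⟩))

lemma eq_vp_of_mem_cliqueCoalition {v : V} {j : N} (hj : j ∈ cliqueCoalition H K vp ep bp Ae)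
    (hb : R.blockOf j = vertex v) : j = vp v := by
  rcases R.blockOf_of_mem_cliqueCoalition hj with ⟨u, -, rfl, h⟩ | ⟨e, -, -, h⟩ |
    ⟨e, -, u, -, -, h⟩ | ⟨e, -, h⟩ <;> simp_all

lemma eq_ep_of_mem_cliqueCoalition {e : Sym2 V} {j : N}
    (hj : j ∈ cliqueCoalition H K vp ep bp Ae) (hb : R.blockOf j = edge e) : j = ep e := by
  rcases R.blockOf_of_mem_cliqueCoalition hj with ⟨u, -, -, h⟩ | ⟨f, -, rfl, h⟩ |
    ⟨f, -, u, -, -, h⟩ | ⟨f, -, h⟩ <;> simp_all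

lemma eq_bp_of_mem_cliqueCoalition {v : V} {e : Sym2 V} {j : N}
    (hj : j ∈ cliqueCoalition H K vp ep bp Ae) (hb : R.blockOf j = incidence v e) :
    e ∈ cliqueEdges H K ∧ j = bp v e := by
  rcases R.blockOf_of_mem_cliqueCoalition hj with ⟨u, -, -, h⟩ | ⟨f, -, -, h⟩ |
    ⟨f, hf, u, -, rfl, h⟩ | ⟨f, -, h⟩ <;> simp_all

lemma friendsIn_vp (hK : H.IsClique (K : Set V)) {v : V} (hv : v ∈ K) :
    friendsIn G (cliqueCoalition H K vp ep bp Ae) (vp v) =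
      (K.erase v).image fun u => bp v s(v, u) := by
  ext j
  simp only [friendsIn, mem_filter, mem_image]
  constructor
  · rintro ⟨hj, hadj⟩
    rcases R.adj_vp hadj with hb | ⟨e, he, hve, rfl⟩
    · exact absurd (R.eq_vp_of_mem_cliqueCoalition hj hb) hadj.ne'
    · obtain ⟨u, hu, rfl⟩ := exists_eq_mk_of_mem_cliqueEdges
        (R.eq_bp_of_mem_cliqueCoalition hj (R.blockOf_bp he hve)).1 hve
      exact ⟨u, hu, rfl⟩
  · rintro ⟨u, hu, rfl⟩
    have he := mk_mem_cliqueEdges hK hv hu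
    exact ⟨mem_cliqueCoalition_of_mem_edgeFriends he
      (mem_edgeFriends.2 (Or.inl ⟨v, Sym2.mem_mk_left v u, rfl⟩)),
      (R.adj_bv v _ (mem_cliqueEdges.1 he).1 (Sym2.mem_mk_left v u)).symm⟩

lemma friendsIn_ep {e : Sym2 V} (he : e ∈ cliqueEdges H K) :
    friendsIn G (cliqueCoalition H K vp ep bp Ae) (ep e) = edgeFriends bp Ae e := by
  have he' := (mem_cliqueEdges.1 he).1
  ext j
  simp only [friendsIn, mem_filter]
  constructor
  · rintro ⟨hj, hadj⟩
    rcases R.adj_ep he' hadj with hb | ⟨v, hv, rfl⟩ | hb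
    · exact absurd (R.eq_ep_of_mem_cliqueCoalition hj hb) hadj.ne'
    · exact mem_edgeFriends.2 (Or.inl ⟨v, hv, rfl⟩)
    · exact mem_edgeFriends.2 (Or.inr ((R.mem_Ae_iff he').2 hb))
  · intro hj
    refine ⟨mem_cliqueCoalition_of_mem_edgeFriends he hj, ?_⟩
    rcases mem_edgeFriends.1 hj with ⟨v, hv, rfl⟩ | hj
    exacts [(R.adj_be v e he' hv).symm, (R.adj_ae e he' j hj).symm]

lemma friendsIn_bp {v : V} {e : Sym2 V} (he : e ∈ cliqueEdges H K) (hv : v ∈ e) :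
    friendsIn G (cliqueCoalition H K vp ep bp Ae) (bp v e) =
      insert (vp v) (insert (ep e) (Ae e)) := by
  have he' := (mem_cliqueEdges.1 he).1
  ext j
  simp only [friendsIn, mem_filter, mem_insert]
  constructor
  · rintro ⟨hj, hadj⟩
    rcases R.adj_bp he' hv hadj with hb | rfl | rfl | hb
    · exact absurd (R.eq_bp_of_mem_cliqueCoalition hj hb).2 hadj.ne'
    · exact Or.inl rfl
    · exact Or.inr (Or.inl rfl)
    · exact Or.inr (Or.inr ((R.mem_Ae_iff he').2 hb))
  · rintro (rfl | rfl | hj)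
    · exact ⟨vp_mem_cliqueCoalition ((mem_cliqueEdges.1 he).2 v hv), R.adj_bv v e he' hv⟩
    · exact ⟨ep_mem_cliqueCoalition he, R.adj_be v e he' hv⟩
    · exact ⟨mem_cliqueCoalition_of_mem_edgeFriends he (mem_edgeFriends.2 (Or.inr hj)),
        (R.adj_ab v e he' hv j hj).symm⟩

lemma friendsIn_dummy {e : Sym2 V} (he : e ∈ cliqueEdges H K) {a : N} (ha : a ∈ Ae e) :
    friendsIn G (cliqueCoalition H K vp ep bp Ae) a =
      insert (ep e) ((edgeFriends bp Ae e).erase a) := by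
  have he' := (mem_cliqueEdges.1 he).1
  ext j
  simp only [friendsIn, mem_filter, mem_insert, mem_erase]
  constructor
  · rintro ⟨hj, hadj⟩
    rcases R.adj_dummy he' ha hadj with hb | rfl | ⟨v, hv, rfl⟩
    · exact Or.inr ⟨hadj.ne', mem_edgeFriends.2 (Or.inr ((R.mem_Ae_iff he').2 hb))⟩
    · exact Or.inl rfl
    · exact Or.inr ⟨hadj.ne', mem_edgeFriends.2 (Or.inl ⟨v, hv, rfl⟩)⟩
  · rintro (rfl | ⟨hja, hj⟩)
    · exact ⟨ep_mem_cliqueCoalition he, R.adj_ae e he' a ha⟩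
    · refine ⟨mem_cliqueCoalition_of_mem_edgeFriends he hj, ?_⟩
      rcases mem_edgeFriends.1 hj with ⟨v, hv, rfl⟩ | hj
      exacts [R.adj_ab v e he' hv a ha, R.Ae_clique e he' a ha j hj hja.symm]

lemma card_friendsIn_cliqueCoalition (hk : 3 ≤ k) (hK : H.IsNClique k K) {j : N}
    (hj : j ∈ cliqueCoalition H K vp ep bp Ae) :
    #(friendsIn G (cliqueCoalition H K vp ep bp Ae) j) = k - 1 := by
  rcases mem_cliqueCoalition.1 hj with ⟨v, hv, rfl⟩ | ⟨e, he, rfl⟩ | ⟨e, he, hje⟩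
  · rw [R.friendsIn_vp hK.isClique hv, card_image_of_injOn, card_erase_of_mem hv, hK.card_eq]
    intro u hu u' hu' h
    have hmem := fun u (hu : u ∈ K.erase v) => mk_mem_cliqueEdges hK.isClique hv hu
    rw [R.bp_inj (mem_cliqueEdges.1 (hmem u hu)).1 (Sym2.mem_mk_left v u)
      (mem_cliqueEdges.1 (hmem u' hu')).1 (Sym2.mem_mk_left v u')] at h
    exact Sym2.congr_right.1 h.2
  · rw [R.friendsIn_ep he, R.card_edgeFriends hk (mem_cliqueEdges.1 he).1]
  · have he' := (mem_cliqueEdges.1 he).1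
    rcases mem_edgeFriends.1 hje with ⟨v, hv, rfl⟩ | ha
    · rw [R.friendsIn_bp he hv, card_insert_of_notMem, card_insert_of_notMem, R.Ae_card e he']
      · omega
      · simp [R.mem_Ae_iff he', R.blockOf_ep he']
      · simp only [mem_insert, R.mem_Ae_iff he', R.blockOf_vp, reduceCtorEq, or_false]
        exact fun h => by simpa [R.blockOf_vp, R.blockOf_ep he'] using congrArg R.blockOf h
    · rw [R.friendsIn_dummy he ha, card_insert_of_notMem, card_erase_of_mem hje,
        R.card_edgeFriends hk he']
      · omega
      · intro h
        rcases R.blockOf_of_mem_edgeFriends he' (mem_of_mem_erase h) with ⟨v, -, h⟩ | h <;>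
          simp [R.blockOf_ep he'] at h

lemma card_cliqueCoalition (hk : 3 ≤ k) (hK : H.IsNClique k K) :
    #(cliqueCoalition H K vp ep bp Ae) = k + k * k.choose 2 := by
  have hE : ∀ e ∈ cliqueEdges H K, e ∈ H.edgeSet := fun e he => (mem_cliqueEdges.1 he).1
  have hvp : Set.InjOn vp K := fun v _ w _ h => by
    simpa [R.blockOf_vp] using congrArg R.blockOf h
  have hep : Set.InjOn ep (cliqueEdges H K) := fun e he f hf h => by
    simpa [R.blockOf_ep (hE e he), R.blockOf_ep (hE f hf)] using congrArg R.blockOf h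
  have hvp_ep : Disjoint (K.image vp) ((cliqueEdges H K).image ep) := by
    simp only [disjoint_left, mem_image, not_exists, not_and]
    rintro _ ⟨v, -, rfl⟩ e he h
    simpa [R.blockOf_vp, R.blockOf_ep (hE e he)] using congrArg R.blockOf h
  have hfriends : Disjoint (K.image vp ∪ (cliqueEdges H K).image ep)
      ((cliqueEdges H K).biUnion (edgeFriends bp Ae)) := by
    simp only [disjoint_left, mem_union, mem_image, mem_biUnion, not_exists, not_and]
    rintro _ (⟨v, -, rfl⟩ | ⟨e, he, rfl⟩) f hf hx <;>
      rcases R.blockOf_of_mem_edgeFriends (hE f hf) hx with ⟨w, -, h⟩ | h <;>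
      simp_all [R.blockOf_vp, R.blockOf_ep]
  have hpair : (cliqueEdges H K : Set (Sym2 V)).PairwiseDisjoint (edgeFriends bp Ae) := by
    intro e he f hf hef
    simp only [Function.onFun, disjoint_left]
    intro x hxe hxf
    rcases R.blockOf_of_mem_edgeFriends (hE e he) hxe with ⟨v, -, h⟩ | h <;>
      rcases R.blockOf_of_mem_edgeFriends (hE f hf) hxf with ⟨w, -, h'⟩ | h' <;>
      simp_all
  rw [cliqueCoalition, card_union_of_disjoint hfriends, card_union_of_disjoint hvp_ep,
    card_image_of_injOn hvp, card_image_of_injOn hep, card_biUnion hpair,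
    sum_const_nat fun e he => R.card_edgeFriends hk (hE e he), card_cliqueEdges hK, hK.card_eq]
  obtain ⟨m, rfl⟩ : ∃ m, k = m + 1 := ⟨k - 1, by omega⟩
  rw [Nat.add_sub_cancel]
  ring

lemma exists_fval_part_lt [Fintype N] (hk : 3 ≤ k) (hodd : Odd k) (hK : H.IsNClique k K)
    {Γ : CoalitionStructure N} (hΓ : IsMinGamma H Pv Pe Pve Ae Γ) (i : N) :
    ∃ m < ((k : ℤ) - 1) * Fintype.card N - (#(cliqueCoalition H K vp ep bp Ae) - k),
      (∀ c ∈ Γ.part i, fval G (Γ.part i) c = m) ∧ (friendsIn G (Γ.part i) i).Nonempty := by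
  have hcard := R.card_cliqueCoalition hk hK
  have hn : #(cliqueCoalition H K vp ep bp Ae) ≤ Fintype.card N := card_le_univ _
  rcases R.isCirculantGadget_or_eq_Ae hΓ i with hP | ⟨e, he, hP⟩
  · have hr : Even (k - 1) := Nat.Odd.sub_odd hodd odd_one
    have hrk : k - 1 < minK' k := by unfold minK'; omega
    refine ⟨((k : ℤ) - 1) * Fintype.card N - (#(cliqueCoalition H K vp ep bp Ae) - k) - 1,
      by omega, fun c hc => ?_, card_pos.1 ?_⟩
    · rw [hP.fval_eq hr hrk hc, hcard, minK', Nat.cast_sub (by omega : 1 ≤ k)]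
      push_cast
      ring
    · rw [hP.card_friendsIn hr hrk (Γ.mem_part i)]
      omega
  · have hclique : G.IsClique (Ae e : Set N) := fun a ha b hb hab => R.Ae_clique e he a ha b hb hab
    have hi' : i ∈ Ae e := hP ▸ Γ.mem_part i
    have hk5 : 5 ≤ k := by
      have := R.Ae_card e he ▸ card_pos.2 ⟨i, hi'⟩
      obtain ⟨m, rfl⟩ := hodd
      omega
    rw [hP]
    refine ⟨((k : ℤ) - 4) * Fintype.card N, by nlinarith, fun c hc => ?_, ?_⟩
    · rw [fval_eq_of_isClique hclique hc, R.Ae_card e he, Nat.cast_sub (by omega : 3 ≤ k)]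
      ring
    · rw [friendsIn_of_isClique hclique hi', ← card_pos, card_erase_of_mem hi', R.Ae_card e he]
      omega

end CliqueCoalition

end MinReduction

/-- In the min-based reduction instance, given a clique `K` of size `k` in `H`, the
coalition `C` consisting of the vertex players of `K`, the edge players of all edges
inside `K`, the corresponding incidence players, and the corresponding dummy players,
has `|C| = k + k·(k choose 2)`, gives every member min-EQ utility
`(k−1)·n − (|C| − k)`, and blocks `Γ` under min-EQ utilities as well as under min-AL
utilities with any weight `w ≥ n^4`. -/
theorem min_clique_coalition_blocks {V N : Type*}
    [Fintype V] [DecidableEq V] [Fintype N] [DecidableEq N]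
    (H : SimpleGraph V) (k : ℕ) (hk : 3 ≤ k) (hodd : Odd k)
    (G : SimpleGraph N) (Pv : V → Finset N) (Pe : Sym2 V → Finset N)
    (Pve : V → Sym2 V → Finset N) (Ae : Sym2 V → Finset N)
    (vp : V → N) (ep : Sym2 V → N) (bp : V → Sym2 V → N)
    (R : MinReduction H k G Pv Pe Pve Ae vp ep bp)
    (w : ℤ) (hw : (Fintype.card N : ℤ) ^ 4 ≤ w)
    (Γ : CoalitionStructure N) (hΓ : IsMinGamma H Pv Pe Pve Ae Γ)
    (K : Finset V) (hK : H.IsNClique k K) :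
    ∀ EK : Finset (Sym2 V), EK = H.edgeFinset.filter (fun e => ∀ v ∈ e, v ∈ K) →
    ∀ C : Finset N,
      C = K.image vp ∪ EK.image ep ∪
          EK.biUnion (fun e =>
            (Finset.univ.filter (fun v : V => v ∈ e)).image (fun v => bp v e) ∪ Ae e) →
      C.card = k + k * Nat.choose k 2 ∧
      (∀ i ∈ C, utilMinEQ G C i =
        ((k : ℤ) - 1) * (Fintype.card N : ℤ) - ((C.card : ℤ) - (k : ℤ))) ∧
      Blocks (utilMinEQ G) Γ C ∧ Blocks (utilMinAL G w) Γ C := by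
  intro EK hEK C hC
  obtain rfl : C = cliqueCoalition H K vp ep bp Ae := hC.trans (by subst hEK; rfl)
  set C := cliqueCoalition H K vp ep bp Ae
  have hval : ∀ j ∈ C, fval G C j = ((k : ℤ) - 1) * Fintype.card N - (#C - k) := by
    intro j hj
    rw [fval_eq_of_mem hj, R.card_friendsIn_cliqueCoalition hk hK hj,
      Nat.cast_sub (by omega : 1 ≤ k)]
    push_cast
    ring
  have hne : C.Nonempty := by
    obtain ⟨v, hv⟩ := card_pos.1 (hK.card_eq ▸ (by omega : 0 < k))
    exact ⟨vp v, vp_mem_cliqueCoalition hv⟩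
  refine ⟨R.card_cliqueCoalition hk hK, fun i hi => utilMinEQ_eq_of_forall_fval_eq hval hi,
    blocks_of_forall_fval_lt ((by positivity : (0 : ℤ) ≤ _).trans hw) hne hval
      (fun j hj => card_pos.1 ?_) fun i _ => R.exists_fval_part_lt hk hodd hK hΓ i⟩
  rw [R.card_friendsIn_cliqueCoalition hk hK hj]
  omega
end
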